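/- (Poincaré Lemma in the plane.) Let M, N : ℝ² → ℝ be continuously differentiable functions satisfying ∂M/∂y (x,y) = ∂N/∂x (x,y) for all (x,y) ∈ ℝ². Then there exists a differentiable function F : ℝ² → ℝ with ∂F/∂x = M and ∂F/∂y = N everywhere; i.e., every closed 1-form on the simply connected domain ℝ² is exact (H¹_dR(ℝ²) = 0). -/

import Mathlib

/-!
Write the 1-form `M dx + N dy` as `ω p = M p • fst + N p • snd : ℝ × ℝ → (ℝ × ℝ →L[ℝ] ℝ)`.
Its derivative satisfies `dω p u v - dω p v u = (∂N/∂x - ∂M/∂y)(p) · (u₁ v₂ - u₂ v₁)`, so the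
closedness condition says exactly that `dω` is symmetric. The Poincaré lemma on convex open
sets (integrate `ω` along segments from a base point) then yields a primitive on all of `ℝ²`.
-/

open ContinuousLinearMap

theorem ContinuousLinearMap.apply_eq_fst_smul_add_snd_smul {R F : Type*} [Semiring R]
    [TopologicalSpace R] [AddCommMonoid F] [Module R F] [TopologicalSpace F]
    (φ : R × R →L[R] F) (v : R × R) :
    φ v = v.1 • φ (1, 0) + v.2 • φ (0, 1) := by
  rw [← map_smul, ← map_smul, ← map_add]
  simp

noncomputable def planeOneForm (M N : ℝ × ℝ → ℝ) (p : ℝ × ℝ) : ℝ × ℝ →L[ℝ] ℝ :=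
  M p • fst ℝ ℝ ℝ + N p • snd ℝ ℝ ℝ

@[simp]
theorem planeOneForm_apply (M N : ℝ × ℝ → ℝ) (p v : ℝ × ℝ) :
    planeOneForm M N p v = M p * v.1 + N p * v.2 := by
  simp [planeOneForm]

theorem hasFDerivAt_planeOneForm {M N : ℝ × ℝ → ℝ} {p : ℝ × ℝ}
    (hM : DifferentiableAt ℝ M p) (hN : DifferentiableAt ℝ N p) :
    HasFDerivAt (planeOneForm M N)
      ((fderiv ℝ M p).smulRight (fst ℝ ℝ ℝ) + (fderiv ℝ N p).smulRight (snd ℝ ℝ ℝ)) p :=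
  (hM.hasFDerivAt.smul_const (fst ℝ ℝ ℝ)).add (hN.hasFDerivAt.smul_const (snd ℝ ℝ ℝ))

theorem fderiv_planeOneForm_symm {M N : ℝ × ℝ → ℝ} {p : ℝ × ℝ}
    (hM : DifferentiableAt ℝ M p) (hN : DifferentiableAt ℝ N p)
    (hclosed : fderiv ℝ M p (0, 1) = fderiv ℝ N p (1, 0)) (u v : ℝ × ℝ) :
    fderiv ℝ (planeOneForm M N) p u v = fderiv ℝ (planeOneForm M N) p v u := by
  simp only [(hasFDerivAt_planeOneForm hM hN).fderiv, add_apply, smulRight_apply, smul_apply,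
    coe_fst', coe_snd', smul_eq_mul]
  rw [(fderiv ℝ M p).apply_eq_fst_smul_add_snd_smul u,
    (fderiv ℝ M p).apply_eq_fst_smul_add_snd_smul v,
    (fderiv ℝ N p).apply_eq_fst_smul_add_snd_smul u,
    (fderiv ℝ N p).apply_eq_fst_smul_add_snd_smul v, hclosed]
  simp only [smul_eq_mul]
  ring

/-- Poincaré Lemma in the plane: if `M, N : ℝ² → ℝ` are `C¹` and satisfy the
closedness condition `∂M/∂y = ∂N/∂x` everywhere, then there is a differentiable
`F : ℝ² → ℝ` with `∂F/∂x = M` and `∂F/∂y = N` everywhere; i.e. every closed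
1-form on `ℝ²` is exact. -/
theorem stmt_10 (M N : ℝ × ℝ → ℝ)
    (hM : ContDiff ℝ 1 M) (hN : ContDiff ℝ 1 N)
    (hclosed : ∀ p : ℝ × ℝ, fderiv ℝ M p (0, 1) = fderiv ℝ N p (1, 0)) :
    ∃ F : ℝ × ℝ → ℝ, ∀ p : ℝ × ℝ,
      ∃ F' : (ℝ × ℝ) →L[ℝ] ℝ,
        HasFDerivAt F F' p ∧ F' (1, 0) = M p ∧ F' (0, 1) = N p := by
  have hMd := hM.differentiable one_ne_zero
  have hNd := hN.differentiable one_ne_zero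
  obtain ⟨F, hF⟩ := convex_univ.exists_forall_hasFDerivAt_of_fderiv_symmetric isOpen_univ
    (fun p _ => (hasFDerivAt_planeOneForm (hMd p) (hNd p)).differentiableAt.differentiableWithinAt)
    fun p _ => fderiv_planeOneForm_symm (hMd p) (hNd p) (hclosed p)
  exact ⟨F, fun p => ⟨planeOneForm M N p, hF p trivial, by simp, by simp⟩⟩
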